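/- Let P be a finite connected poset. If E(P) contains a crown with an edge (x,y) (x <_P y) such that (x,y) does not belong to any improper 4-crown in E(P), then P has a retract which is a crown containing x and y. -/

import Mathlib

def ConnectedPoset (α : Type*) [PartialOrder α] : Prop :=
  ∀ a b : α, Relation.ReflTransGen (fun u v : α => u ≤ v ∨ v ≤ u) a b

/-- The set of extremal points of a poset. -/
def EP (α : Type*) [PartialOrder α] : Set α := {z | IsMin z ∨ IsMax z}

/-- Comparability of two (distinct) points. -/
def Comp {α : Type*} [PartialOrder α] (x y : α) : Prop := x ≠ y ∧ (x ≤ y ∨ y ≤ x)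

/-- `S` is a crown: at least 4 points and its comparability graph is a cycle
(2-regular and connected). -/
def IsCrown {α : Type*} [PartialOrder α] (S : Set α) : Prop :=
  4 ≤ S.ncard ∧
  (∀ x ∈ S, {y | y ∈ S ∧ Comp x y}.ncard = 2) ∧
  ∀ x ∈ S, ∀ y ∈ S,
    Relation.ReflTransGen (fun u v : α => u ∈ S ∧ v ∈ S ∧ Comp u v) x y

/-- `C` is a retract of the whole poset. -/
def IsRetract {α : Type*} [PartialOrder α] (C : Set α) : Prop :=
  ∃ r : α → α, Monotone r ∧ (∀ z, r (r z) = r z) ∧ Set.range r = C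

/-- `{a,b,v,w}` is an improper 4-crown in `E(P)`. -/
def IsImproper4CrownE {α : Type*} [PartialOrder α] (a b v w : α) : Prop :=
  IsMin a ∧ IsMin b ∧ a ≠ b ∧ IsMax v ∧ IsMax w ∧ v ≠ w ∧
  a < v ∧ a < w ∧ b < v ∧ b < w ∧
  ∃ m : α, a < m ∧ b < m ∧ m < v ∧ m < w

/-!
Let `G` be the comparability graph of `E(P)` with the edge `xy` removed. The comparability graph of
the crown is a cycle, so no edge of it is a bridge and `x`, `y` stay connected in `G`; since `P` is
connected, every extremal point is connected to `x` in `G`. A shortest `x`–`y` path in `G`, closed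
up by the edge `xy`, is an induced cycle of even length `m ≥ 4`, i.e. a crown `C` through `x` and
`y`. The distance from `x` in `G`, read modulo `m`, changes by `±1` along every comparability
between extremal points, so it maps `E(P)` order-preservingly onto `C`. Such a map extends to a
retraction of `P` as soon as, for every `z`, it is constant on the minimal points below `z` or on
the maximal points above `z`. For `m > 4` this holds because a cycle of length `m` has no `4`-cycle;
for `m = 4` it is exactly the absence of an improper `4`-crown through `(x, y)`.
-/

section

open SimpleGraph

variable {α : Type*} [PartialOrder α]

lemma exists_isMin_le [Finite α] (z : α) : ∃ a, IsMin a ∧ a ≤ z := by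
  obtain ⟨a, haz, ha⟩ := Finite.exists_le_minimal (p := fun _ : α => True) (a := z) trivial
  exact ⟨a, fun b hb => ha.2 trivial hb, haz⟩

lemma exists_le_isMax [Finite α] (z : α) : ∃ u, IsMax u ∧ z ≤ u :=
  exists_isMin_le (α := αᵒᵈ) z

lemma ConnectedPoset.eq_of_isMin_of_isMax (hconn : ConnectedPoset α) {v : α} (hmin : IsMin v)
    (hmax : IsMax v) (w : α) : w = v := by
  induction hconn v w with
  | refl => rfl
  | tail _ hstep ih =>
    subst ih
    rcases hstep with h | h
    · exact (hmax h).antisymm h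
    · exact h.antisymm (hmin h)

lemma ConnectedPoset.not_isMax_of_isMin [Nontrivial α] (hconn : ConnectedPoset α) {v : α}
    (hmin : IsMin v) : ¬ IsMax v := fun hmax =>
  (exists_ne v).elim fun w hw => hw (hconn.eq_of_isMin_of_isMax hmin hmax w)

lemma ConnectedPoset.lt_of_isMin_of_isMax [Nontrivial α] (hconn : ConnectedPoset α) {a u : α}
    (ha : IsMin a) (hu : IsMax u) (hau : a ≤ u) : a < u :=
  hau.lt_of_ne fun h => hconn.not_isMax_of_isMin ha (h ▸ hu)

lemma isMin_of_mem_EP_of_lt {a b : α} (ha : a ∈ EP α) (hab : a < b) : IsMin a :=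
  ha.resolve_right fun h => h.not_lt hab

lemma isMax_of_mem_EP_of_lt {a b : α} (hb : b ∈ EP α) (hab : a < b) : IsMax b :=
  hb.resolve_left fun h => h.not_lt hab

lemma Comp.symm {a b : α} (h : Comp a b) : Comp b a := ⟨h.1.symm, h.2.symm⟩

lemma Comp.lt_of_isMin {a b : α} (h : Comp a b) (ha : IsMin a) : a < b :=
  h.2.elim (fun hab => hab.lt_of_ne h.1) fun hba => absurd (hba.antisymm (ha hba)) h.1.symm

lemma Comp.lt_of_isMax {a b : α} (h : Comp a b) (hb : IsMax b) : a < b :=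
  h.2.elim (fun hab => hab.lt_of_ne h.1) fun hba => absurd (le_antisymm (hb hba) hba) h.1

lemma comp_of_lt {a b : α} (h : a < b) : Comp a b := ⟨h.ne, .inl h.le⟩

def IsConstBelowOrAbove (ρ : α → α) : Prop :=
  ∀ z a a' u u', IsMin a → a ≤ z → IsMin a' → a' ≤ z →
    IsMax u → z ≤ u → IsMax u' → z ≤ u' → ρ a = ρ a' ∨ ρ u = ρ u'

def SeparatesMaxAbove (ρ : α → α) (z : α) : Prop :=
  ∃ u u', IsMax u ∧ z ≤ u ∧ IsMax u' ∧ z ≤ u' ∧ ρ u ≠ ρ u'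

section Extension

variable [Finite α] (ρ : α → α)

open scoped Classical in
/-- When `ρ` satisfies `IsConstBelowOrAbove`, the chosen extremal points do not matter. -/
noncomputable def extendFromExtremal (z : α) : α :=
  if SeparatesMaxAbove ρ z then ρ (exists_isMin_le z).choose else ρ (exists_le_isMax z).choose

variable {ρ}

lemma extendFromExtremal_eq_of_separates (hρ : IsConstBelowOrAbove ρ) {z a : α}
    (hz : SeparatesMaxAbove ρ z) (ha : IsMin a) (haz : a ≤ z) :
    extendFromExtremal ρ z = ρ a := by
  obtain ⟨hmin, hle⟩ := (exists_isMin_le z).choose_spec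
  rw [extendFromExtremal, if_pos hz]
  by_contra hne
  obtain ⟨u, u', hu, hzu, hu', hzu', hne'⟩ := hz
  exact hne' ((hρ z _ a u u' hmin hle ha haz hu hzu hu' hzu').resolve_left hne)

lemma extendFromExtremal_eq_of_not_separates {z u : α} (hz : ¬ SeparatesMaxAbove ρ z)
    (hu : IsMax u) (hzu : z ≤ u) : extendFromExtremal ρ z = ρ u := by
  obtain ⟨hmax, hle⟩ := (exists_le_isMax z).choose_spec
  rw [extendFromExtremal, if_neg hz]
  by_contra hne
  exact hz ⟨_, u, hmax, hle, hu, hzu, hne⟩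

lemma monotone_extendFromExtremal (hρ : IsConstBelowOrAbove ρ)
    (hmono : ∀ a u, IsMin a → IsMax u → a ≤ u → ρ a ≤ ρ u) :
    Monotone (extendFromExtremal ρ) := by
  intro z z' hzz'
  obtain ⟨a, ha, haz⟩ := exists_isMin_le z
  obtain ⟨u, hu, hzu⟩ := exists_le_isMax z'
  by_cases hz' : SeparatesMaxAbove ρ z'
  · have hz : SeparatesMaxAbove ρ z := by
      obtain ⟨v, v', hv, hzv, hv', hzv', hne⟩ := hz'
      exact ⟨v, v', hv, hzz'.trans hzv, hv', hzz'.trans hzv', hne⟩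
    rw [extendFromExtremal_eq_of_separates hρ hz ha haz,
      extendFromExtremal_eq_of_separates hρ hz' ha (haz.trans hzz')]
  · rw [extendFromExtremal_eq_of_not_separates hz' hu hzu]
    by_cases hz : SeparatesMaxAbove ρ z
    · rw [extendFromExtremal_eq_of_separates hρ hz ha haz]
      exact hmono a u ha hu (haz.trans (hzz'.trans hzu))
    · rw [extendFromExtremal_eq_of_not_separates hz hu (hzz'.trans hzu)]

theorem isRetract_of_extremal (hρ : IsConstBelowOrAbove ρ) {C : Set α}
    (hC : ∀ v ∈ C, IsMin v →
      ∃ u ∈ C, ∃ u' ∈ C, u ≠ u' ∧ IsMax u ∧ IsMax u' ∧ v ≤ u ∧ v ≤ u')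
    (hCE : C ⊆ EP α) (hfix : ∀ v ∈ C, ρ v = v) (hmaps : ∀ v ∈ EP α, ρ v ∈ C)
    (hmono : ∀ a u, IsMin a → IsMax u → a ≤ u → ρ a ≤ ρ u) : IsRetract C := by
  have hmem : ∀ z, extendFromExtremal ρ z ∈ C := by
    intro z
    by_cases hz : SeparatesMaxAbove ρ z
    · obtain ⟨a, ha, haz⟩ := exists_isMin_le z
      rw [extendFromExtremal_eq_of_separates hρ hz ha haz]
      exact hmaps a (.inl ha)
    · obtain ⟨u, hu, hzu⟩ := exists_le_isMax z
      rw [extendFromExtremal_eq_of_not_separates hz hu hzu]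
      exact hmaps u (.inr hu)
  have hfix' : ∀ v ∈ C, extendFromExtremal ρ v = v := by
    intro v hv
    rcases hCE hv with hmin | hmax
    · obtain ⟨u, hu, u', hu', hne, hmu, hmu', hvu, hvu'⟩ := hC v hv hmin
      have hsep : SeparatesMaxAbove ρ v :=
        ⟨u, u', hmu, hvu, hmu', hvu', by rwa [hfix u hu, hfix u' hu']⟩
      rw [extendFromExtremal_eq_of_separates hρ hsep hmin le_rfl, hfix v hv]
    · have hsep : ¬ SeparatesMaxAbove ρ v := by
        rintro ⟨u, u', -, hvu, -, hvu', hne⟩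
        rw [(hmax hvu).antisymm hvu, (hmax hvu').antisymm hvu'] at hne
        exact hne rfl
      rw [extendFromExtremal_eq_of_not_separates hsep hmax le_rfl, hfix v hv]
  refine ⟨extendFromExtremal ρ, monotone_extendFromExtremal hρ hmono,
    fun z => hfix' _ (hmem z), Set.Subset.antisymm ?_ fun v hv => ⟨v, hfix' v hv⟩⟩
  rintro _ ⟨z, rfl⟩
  exact hmem z

end Extension

namespace SimpleGraph

variable {V : Type*} {G : SimpleGraph V}

theorem reachable_deleteEdges_of_forall_even_degree [Fintype V] [DecidableRel G.Adj]
    (heven : ∀ w, Even (G.degree w)) {u v : V} (huv : G.Adj u v) :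
    (G.deleteEdges {s(u, v)}).Reachable u v := by
  classical
  set H := G.deleteEdges {s(u, v)}
  by_contra hnr
  -- the component of `u` in `H`, in which `u` would be the only vertex of odd degree
  let K : SimpleGraph V :=
    { Adj := fun a b => H.Adj a b ∧ H.Reachable u a
      symm := ⟨fun _ _ h => ⟨h.1.symm, h.2.trans h.1.reachable⟩⟩
      loopless := ⟨fun _ h => h.1.ne rfl⟩ }
  have hKu : K.neighborFinset u = (G.neighborFinset u).erase v := by
    ext b
    simp only [K, H, mem_neighborFinset, Finset.mem_erase, deleteEdges_adj,
      Set.mem_singleton_iff, Sym2.eq_iff]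
    grind [G.loopless.irrefl, Reachable.refl]
  have hKw : ∀ w, w ≠ u → H.Reachable u w → K.neighborFinset w = G.neighborFinset w := by
    intro w hwu hw
    have hwv : w ≠ v := by rintro rfl; exact hnr hw
    ext b
    simp only [K, H, mem_neighborFinset, deleteEdges_adj, Set.mem_singleton_iff, Sym2.eq_iff]
    grind
  have hodd : Odd (K.degree u) := by
    rw [← card_neighborFinset_eq_degree, hKu,
      Finset.card_erase_of_mem ((mem_neighborFinset ..).2 huv), card_neighborFinset_eq_degree]
    exact Nat.Even.sub_odd ((G.degree_pos_iff_exists_adj u).2 ⟨v, huv⟩) (heven u) odd_one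
  obtain ⟨w, hwu, hw⟩ := K.exists_ne_odd_degree_of_exists_odd_degree u hodd
  by_cases hreach : H.Reachable u w
  · rw [← card_neighborFinset_eq_degree, hKw w hwu hreach, card_neighborFinset_eq_degree] at hw
    exact Nat.not_odd_iff_even.2 (heven w) hw
  · have : K.degree w = 0 := by
      rw [← card_neighborFinset_eq_degree, Finset.card_eq_zero, Finset.eq_empty_iff_forall_notMem]
      exact fun b hb => hreach ((mem_neighborFinset ..).1 hb).2
    simp [this] at hw

theorem reachable_deleteEdges_of_reachable {x y a b : V}
    (hxy : (G.deleteEdges {s(x, y)}).Reachable x y) (hab : G.Reachable a b) :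
    (G.deleteEdges {s(x, y)}).Reachable a b := by
  obtain ⟨p⟩ := hab
  induction p with
  | nil => rfl
  | @cons c d _ h _ ih =>
    refine Reachable.trans ?_ ih
    by_cases hcd : s(c, d) = s(x, y)
    · rcases Sym2.eq_iff.1 hcd with ⟨rfl, rfl⟩ | ⟨rfl, rfl⟩
      exacts [hxy, hxy.symm]
    · exact (deleteEdges_adj.2 ⟨h, hcd⟩).reachable

theorem Walk.dist_getVert_of_length_eq_dist {u v : V} (p : G.Walk u v)
    (hp : p.length = G.dist u v) {i : ℕ} (hi : i ≤ p.length) : G.dist u (p.getVert i) = i := by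
  rw [← length_eq_dist_of_subwalk hp (p.isSubwalk_take i), Walk.take_length]
  exact min_eq_left hi

end SimpleGraph

variable (α) in
def extremalGraph : SimpleGraph α where
  Adj a b := (IsMin a ∧ IsMax b ∧ a < b) ∨ (IsMin b ∧ IsMax a ∧ b < a)
  symm := ⟨fun _ _ h => h.symm⟩
  loopless := ⟨fun _ h => h.elim (fun h => h.2.2.false) fun h => h.2.2.false⟩

lemma extremalGraph_adj_of_lt {a b : α} (ha : a ∈ EP α) (hb : b ∈ EP α) (hab : a < b) :
    (extremalGraph α).Adj a b :=
  .inl ⟨isMin_of_mem_EP_of_lt ha hab, isMax_of_mem_EP_of_lt hb hab, hab⟩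

lemma comp_of_extremalGraph_adj {a b : α} (h : (extremalGraph α).Adj a b) : Comp a b :=
  h.elim (fun h => comp_of_lt h.2.2) fun h => (comp_of_lt h.2.2).symm

lemma isMin_iff_not_isMin_of_extremalGraph_adj {a b : α} (h : (extremalGraph α).Adj a b) :
    IsMin a ↔ ¬ IsMin b := by
  rcases h with ⟨ha, -, hab⟩ | ⟨hb, -, hba⟩
  · exact iff_of_true ha fun hb => hb.not_lt hab
  · exact iff_of_false (fun ha => ha.not_lt hba) (not_not.2 hb)

lemma even_length_iff_of_le_extremalGraph {G : SimpleGraph α} (hG : G ≤ extremalGraph α)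
    {a b : α} (p : G.Walk a b) : Even p.length ↔ (IsMin a ↔ IsMin b) := by
  classical
  let c : G.Coloring Bool := Coloring.mk (fun v => decide (IsMin v)) fun h => by
    have := isMin_iff_not_isMin_of_extremalGraph_adj (hG h)
    rw [Ne, decide_eq_decide]
    tauto
  exact (c.even_length_iff_congr p).trans (by simp [c, Coloring.mk])

lemma mem_EP_of_reachable {G : SimpleGraph α} (hG : G ≤ extremalGraph α) {x v : α}
    (hx : x ∈ EP α) (h : G.Reachable x v) : v ∈ EP α := by
  obtain ⟨p⟩ := h
  cases p.reverse with
  | nil => exact hx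
  | cons h _ => exact (hG h).elim (fun h => .inl h.1) fun h => .inr h.2.1

lemma isMin_iff_even_dist {G : SimpleGraph α} (hG : G ≤ extremalGraph α) {x v : α}
    (hx : IsMin x) (h : G.Reachable x v) : IsMin v ↔ Even (G.dist x v) := by
  obtain ⟨p, hp⟩ := h.exists_walk_length_eq_dist
  rw [← hp, even_length_iff_of_le_extremalGraph hG p]
  simp [hx]

lemma dist_eq_add_one_or_of_adj {G : SimpleGraph α} (hG : G ≤ extremalGraph α) {x a b : α}
    (hx : IsMin x) (ha : G.Reachable x a) (hab : G.Adj a b) :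
    G.dist x b = G.dist x a + 1 ∨ G.dist x a = G.dist x b + 1 := by
  have hpar : Even (G.dist x a) ↔ ¬ Even (G.dist x b) := by
    rw [← isMin_iff_even_dist hG hx ha, ← isMin_iff_even_dist hG hx (ha.trans hab.reachable)]
    exact isMin_iff_not_isMin_of_extremalGraph_adj (hG hab)
  rw [Nat.even_iff, Nat.even_iff] at hpar
  rcases hab.diff_dist_adj (u := x) with h | h | h <;> omega

lemma ConnectedPoset.extremalGraph_reachable [Finite α] [Nontrivial α] (hconn : ConnectedPoset α)
    {a b : α} (ha : a ∈ EP α) (hb : b ∈ EP α) : (extremalGraph α).Reachable a b := by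
  have hadj : ∀ {p u}, IsMin p → IsMax u → p ≤ u → (extremalGraph α).Reachable p u :=
    fun hp hu hpu => Adj.reachable (.inl ⟨hp, hu, hconn.lt_of_isMin_of_isMax hp hu hpu⟩)
  have hcommon : ∀ {z u w}, IsMax u → z ≤ u → IsMax w → z ≤ w →
      (extremalGraph α).Reachable u w := by
    intro z u w hu hzu hw hzw
    obtain ⟨p, hp, hpz⟩ := exists_isMin_le z
    exact (hadj hp hu (hpz.trans hzu)).symm.trans (hadj hp hw (hpz.trans hzw))
  choose f hf hzf using exists_le_isMax (α := α)
  have hstep : ∀ {z z'}, (z ≤ z' ∨ z' ≤ z) →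
      (extremalGraph α).Reachable (f z) (f z') := by
    rintro z z' (h | h)
    · exact hcommon (hf z) (hzf z) (hf z') (h.trans (hzf z'))
    · exact hcommon (hf z) (h.trans (hzf z)) (hf z') (hzf z')
  have hf_reach : ∀ {v}, v ∈ EP α → (extremalGraph α).Reachable v (f v) := by
    rintro v (hv | hv)
    · exact hadj hv (hf v) (hzf v)
    · rw [(hv (hzf v)).antisymm (hzf v)]
  have hchain : ∀ b, (extremalGraph α).Reachable (f a) (f b) := fun b => by
    induction hconn a b with
    | refl => rfl
    | tail _ h ih => exact ih.trans (hstep h)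
  exact (hf_reach ha).trans ((hchain b).trans (hf_reach hb).symm)

def compGraph (S : Set α) : SimpleGraph α where
  Adj a b := a ∈ S ∧ b ∈ S ∧ Comp a b
  symm := ⟨fun _ _ h => ⟨h.2.1, h.1, h.2.2.symm⟩⟩
  loopless := ⟨fun _ h => h.2.2.1 rfl⟩

lemma compGraph_le_extremalGraph {S : Set α} (hSE : S ⊆ EP α) :
    compGraph S ≤ extremalGraph α := by
  rintro a b ⟨ha, hb, hne, hab | hba⟩
  · exact extremalGraph_adj_of_lt (hSE ha) (hSE hb) (hab.lt_of_ne hne)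
  · exact (extremalGraph_adj_of_lt (hSE hb) (hSE ha) (hba.lt_of_ne hne.symm)).symm

lemma IsCrown.reachable_deleteEdges [Finite α] {S : Set α} (hS : IsCrown S) {x y : α}
    (hxy : (compGraph S).Adj x y) : ((compGraph S).deleteEdges {s(x, y)}).Reachable x y := by
  classical
  have := Fintype.ofFinite α
  refine reachable_deleteEdges_of_forall_even_degree (fun w => ?_) hxy
  rw [← card_neighborSet_eq_degree, ← Nat.card_eq_fintype_card, Nat.card_coe_set_eq]
  by_cases hw : w ∈ S
  · have : (compGraph S).neighborSet w = {b | b ∈ S ∧ Comp w b} := by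
      ext b; simp [compGraph, hw]
    rw [this, hS.2.1 w hw]
    exact even_two
  · have : (compGraph S).neighborSet w = ∅ := by
      ext b; simp [compGraph, hw]
    rw [this, Set.ncard_empty]
    exact ⟨0, rfl⟩

lemma IsCrown.exists_ne_isMax_ge {S : Set α} (hS : IsCrown S) (hSE : S ⊆ EP α) :
    ∀ v ∈ S, IsMin v →
      ∃ u ∈ S, ∃ u' ∈ S, u ≠ u' ∧ IsMax u ∧ IsMax u' ∧ v ≤ u ∧ v ≤ u' := by
  intro v hv hmin
  obtain ⟨u, u', hne, huu'⟩ := Set.ncard_eq_two.1 (hS.2.1 v hv)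
  have hmem : ∀ w ∈ ({u, u'} : Set α), w ∈ S ∧ IsMax w ∧ v ≤ w := by
    intro w hw
    rw [← huu'] at hw
    have hlt := hw.2.lt_of_isMin hmin
    exact ⟨hw.1, isMax_of_mem_EP_of_lt (hSE hw.1) hlt, hlt.le⟩
  obtain ⟨hu, hmu, hvu⟩ := hmem u (by simp)
  obtain ⟨hu', hmu', hvu'⟩ := hmem u' (by simp)
  exact ⟨u, hu, u', hu', hne, hmu, hmu', hvu, hvu'⟩

lemma eq_of_add_one_or_of_ne {R : Type*} [CommRing R] (h4 : (4 : R) ≠ 0) {p q r s : R}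
    (hpr : r = p + 1 ∨ p = r + 1) (hqr : r = q + 1 ∨ q = r + 1)
    (hps : s = p + 1 ∨ p = s + 1) (hqs : s = q + 1 ∨ q = s + 1) (hpq : p ≠ q) : r = s := by
  rcases hpr with h1 | h1 <;> rcases hqr with h2 | h2 <;> rcases hps with h3 | h3 <;>
    rcases hqs with h4' | h4' <;>
    first
      | linear_combination h1 - h3
      | linear_combination h3 - h1
      | exact absurd (by linear_combination h2 - h1) hpq
      | exact absurd (by linear_combination h1 - h2) hpq
      | exact absurd (by linear_combination h4' - h3) hpq
      | exact absurd (by linear_combination h3 - h4') hpq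
      | exact absurd (by linear_combination -h1 - h2 - h3 - h4') h4

lemma natCast_zmod_ne_zero_of_lt {m n : ℕ} (h0 : 0 < n) (hn : n < m) : (n : ZMod m) ≠ 0 := by
  rw [Ne, ZMod.natCast_eq_zero_iff]
  exact fun h => absurd (Nat.le_of_dvd h0 h) (by omega)

/-- A crown of `E(P)` through the edge `(x, y)`, enumerated cyclically by `e`, together with the
cyclic height `φ` that makes `e ∘ φ` a candidate retraction onto it. -/
structure CyclicLabelling (x y : α) (m : ℕ) where
  e : ZMod m → α
  φ : α → ZMod m
  e_zero : e 0 = x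
  e_neg_one : e (-1) = y
  e_mem : ∀ k, e k ∈ EP α
  comp_succ : ∀ k, Comp (e k) (e (k + 1))
  φ_e : ∀ k, φ (e k) = k
  φ_step : ∀ a u, IsMin a → IsMax u → a ≤ u → φ u = φ a + 1 ∨ φ a = φ u + 1
  isMin_e_φ : ∀ a, IsMin a → IsMin (e (φ a))

namespace CyclicLabelling

variable {x y : α} {m : ℕ} (L : CyclicLabelling x y m)

lemma injective_e : Function.Injective L.e := Function.LeftInverse.injective L.φ_e

lemma range_subset_EP : Set.range L.e ⊆ EP α := by
  rintro _ ⟨k, rfl⟩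
  exact L.e_mem k

lemma comp_iff (k l : ZMod m) : Comp (L.e k) (L.e l) ↔ l = k + 1 ∨ k = l + 1 := by
  constructor
  · intro h
    wlog hkl : L.e k ≤ L.e l generalizing k l
    · exact (this l k h.symm (h.2.resolve_left hkl)).symm
    have hlt := hkl.lt_of_ne h.1
    have := L.φ_step _ _ (isMin_of_mem_EP_of_lt (L.e_mem k) hlt)
      (isMax_of_mem_EP_of_lt (L.e_mem l) hlt) hkl
    rwa [L.φ_e, L.φ_e] at this
  · rintro (rfl | rfl)
    exacts [L.comp_succ k, (L.comp_succ l).symm]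

lemma isCrown (hm : 4 ≤ m) : IsCrown (Set.range L.e) := by
  have : NeZero m := ⟨by omega⟩
  have h2 : (2 : ZMod m) ≠ 0 := by
    exact_mod_cast natCast_zmod_ne_zero_of_lt two_pos (by omega : 2 < m)
  refine ⟨?_, ?_, ?_⟩
  · rwa [Set.ncard_range_of_injective L.injective_e, Nat.card_zmod]
  · rintro _ ⟨k, rfl⟩
    have : {b | b ∈ Set.range L.e ∧ Comp (L.e k) b} = {L.e (k + 1), L.e (k - 1)} := by
      ext b
      constructor
      · rintro ⟨⟨l, rfl⟩, h⟩
        rcases (L.comp_iff k l).1 h with rfl | rfl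
        · exact .inl rfl
        · exact .inr (congrArg L.e (add_sub_cancel_right l 1).symm)
      · rintro (rfl | rfl)
        · exact ⟨⟨_, rfl⟩, (L.comp_iff _ _).2 (.inl rfl)⟩
        · exact ⟨⟨_, rfl⟩, (L.comp_iff _ _).2 (.inr (sub_add_cancel k 1).symm)⟩
    rw [this, Set.ncard_pair (L.injective_e.ne fun h => h2 (by linear_combination h))]
  · have hpath : ∀ k (n : ℕ), Relation.ReflTransGen (compGraph (Set.range L.e)).Adj
        (L.e k) (L.e (k + n)) := by
      intro k n
      induction n with
      | zero => rw [Nat.cast_zero, add_zero]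
      | succ n ih =>
        refine ih.tail ⟨⟨_, rfl⟩, ⟨_, rfl⟩, ?_⟩
        rw [Nat.cast_succ, ← add_assoc]
        exact L.comp_succ _
    rintro _ ⟨k, rfl⟩ _ ⟨l, rfl⟩
    have h := hpath k (l - k).val
    rwa [ZMod.natCast_zmod_val, add_sub_cancel] at h

theorem isRetract [Finite α] (hm : 5 ≤ m) : IsRetract (Set.range L.e) := by
  have h4 : (4 : ZMod m) ≠ 0 := by
    exact_mod_cast natCast_zmod_ne_zero_of_lt four_pos (by omega : 4 < m)
  refine isRetract_of_extremal (ρ := L.e ∘ L.φ) ?_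
    ((L.isCrown (by omega)).exists_ne_isMax_ge L.range_subset_EP) L.range_subset_EP ?_ ?_ ?_
  · intro z a a' u u' ha haz ha' ha'z hu hzu hu' hzu'
    by_cases hφa : L.φ a = L.φ a'
    · exact .inl (congrArg L.e hφa)
    · refine .inr (congrArg L.e (eq_of_add_one_or_of_ne h4 (L.φ_step a u ha hu (haz.trans hzu))
        (L.φ_step a' u ha' hu (ha'z.trans hzu)) (L.φ_step a u' ha hu' (haz.trans hzu'))
        (L.φ_step a' u' ha' hu' (ha'z.trans hzu')) hφa))
  · rintro _ ⟨k, rfl⟩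
    simp [L.φ_e]
  · exact fun _ _ => ⟨_, rfl⟩
  · intro a u ha hu hau
    exact (((L.comp_iff _ _).2 (L.φ_step a u ha hu hau)).lt_of_isMin (L.isMin_e_φ a ha)).le

end CyclicLabelling

lemma isImproper4CrownE_of_le {x b y w z : α} (hx : IsMin x) (hb : IsMin b) (hbx : b ≠ x)
    (hy : IsMax y) (hw : IsMax w) (hwy : w ≠ y) (hxz : x ≤ z) (hbz : b ≤ z) (hzy : z ≤ y)
    (hzw : z ≤ w) : IsImproper4CrownE x b y w := by
  have hxz' : x < z := hxz.lt_of_ne (by rintro rfl; exact hbx (le_antisymm hbz (hx hbz)))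
  have hbz' : b < z := hbz.lt_of_ne (by rintro rfl; exact hbx (le_antisymm (hb hxz) hxz))
  have hzy' : z < y := hzy.lt_of_ne (by rintro rfl; exact hwy (le_antisymm (hy hzw) hzw))
  have hzw' : z < w := hzw.lt_of_ne (by rintro rfl; exact hwy (le_antisymm hzy (hw hzy)))
  exact ⟨hx, hb, hbx.symm, hy, hw, hwy.symm, hxz'.trans hzy', hxz'.trans hzw', hbz'.trans hzy',
    hbz'.trans hzw', z, hxz', hbz', hzy', hzw'⟩

open scoped Classical in
noncomputable def foldOntoFourCrown (x y b u v : α) : α :=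
  if IsMin v then (if v = x then x else b) else (if v = y then y else u)

section FourCrown

open scoped Classical

variable {x y b u : α}

lemma foldOntoFourCrown_of_isMin {a : α} (ha : IsMin a) :
    foldOntoFourCrown x y b u a = if a = x then x else b :=
  if_pos ha

lemma foldOntoFourCrown_of_isMax [Nontrivial α] (hconn : ConnectedPoset α) {w : α}
    (hw : IsMax w) : foldOntoFourCrown x y b u w = if w = y then y else u :=
  if_neg fun h => hconn.not_isMax_of_isMin h hw

lemma isConstBelowOrAbove_foldOntoFourCrown [Nontrivial α] (hconn : ConnectedPoset α)
    (hx : IsMin x) (hy : IsMax y)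
    (hedge : ¬ ∃ a b v w : α,
      IsImproper4CrownE a b v w ∧ (x = a ∨ x = b) ∧ (y = v ∨ y = w)) :
    IsConstBelowOrAbove (foldOntoFourCrown x y b u) := by
  have key : ∀ {p q c d : α}, (if p = c then c else d) ≠ (if q = c then c else d) →
      p = c ∧ q ≠ c ∨ q = c ∧ p ≠ c := by
    intro p q c d h
    by_cases hp : p = c <;> by_cases hq : q = c <;> simp_all
  intro z a a' w w' ha haz ha' ha'z hw hzw hw' hzw'
  by_contra! h
  rw [foldOntoFourCrown_of_isMin ha, foldOntoFourCrown_of_isMin ha',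
    foldOntoFourCrown_of_isMax hconn hw, foldOntoFourCrown_of_isMax hconn hw'] at h
  have hmin : x ≤ z ∧ ∃ c, IsMin c ∧ c ≠ x ∧ c ≤ z := by
    rcases key h.1 with ⟨rfl, hne⟩ | ⟨rfl, hne⟩
    exacts [⟨haz, a', ha', hne, ha'z⟩, ⟨ha'z, a, ha, hne, haz⟩]
  have hmax : z ≤ y ∧ ∃ v, IsMax v ∧ v ≠ y ∧ z ≤ v := by
    rcases key h.2 with ⟨rfl, hne⟩ | ⟨rfl, hne⟩
    exacts [⟨hzw, w', hw', hne, hzw'⟩, ⟨hzw', w, hw, hne, hzw⟩]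
  obtain ⟨hxz, c, hc, hcx, hcz⟩ := hmin
  obtain ⟨hzy, v, hv, hvy, hzv⟩ := hmax
  exact hedge ⟨x, c, y, v, isImproper4CrownE_of_le hx hc hcx hy hv hvy hxz hcz hzy hzv,
    .inl rfl, .inl rfl⟩

end FourCrown

theorem CyclicLabelling.isRetract_of_four [Finite α] [Nontrivial α] (hconn : ConnectedPoset α)
    {x y : α} (hxy : x < y) (L : CyclicLabelling x y 4)
    (hedge : ¬ ∃ a b v w : α,
      IsImproper4CrownE a b v w ∧ (x = a ∨ x = b) ∧ (y = v ∨ y = w)) :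
    IsRetract (Set.range L.e) := by
  classical
  set u := L.e 1
  set b := L.e 2
  have hx : IsMin x := isMin_of_mem_EP_of_lt (L.e_zero ▸ L.e_mem 0) hxy
  have hy : IsMax y := isMax_of_mem_EP_of_lt (by rw [← L.e_neg_one]; exact L.e_mem _) hxy
  have hxu : x < u := by
    have h := (L.comp_succ 0).lt_of_isMin (by rwa [L.e_zero])
    rwa [zero_add, L.e_zero] at h
  have hu : IsMax u := isMax_of_mem_EP_of_lt (L.e_mem 1) hxu
  have hbu : b < u := by
    have h := (L.comp_succ 1).symm.lt_of_isMax hu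
    rwa [one_add_one_eq_two] at h
  have hb : IsMin b := isMin_of_mem_EP_of_lt (L.e_mem 2) hbu
  have hby : b < y := by
    have h := (L.comp_succ 2).lt_of_isMin hb
    rwa [show (2 : ZMod 4) + 1 = -1 by decide, L.e_neg_one] at h
  have hbx : b ≠ x := L.e_zero ▸ L.injective_e.ne (by decide)
  have huy : u ≠ y := L.e_neg_one ▸ L.injective_e.ne (by decide)
  refine isRetract_of_extremal
    (isConstBelowOrAbove_foldOntoFourCrown (b := b) (u := u) hconn hx hy hedge)
    ((L.isCrown le_rfl).exists_ne_isMax_ge L.range_subset_EP) L.range_subset_EP ?_ ?_ ?_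
  · rintro _ ⟨k, rfl⟩
    fin_cases k
    · change foldOntoFourCrown x y b u (L.e 0) = L.e 0
      rw [L.e_zero, foldOntoFourCrown_of_isMin hx, if_pos rfl]
    · change foldOntoFourCrown x y b u u = u
      rw [foldOntoFourCrown_of_isMax hconn hu, if_neg huy]
    · change foldOntoFourCrown x y b u b = b
      rw [foldOntoFourCrown_of_isMin hb, if_neg hbx]
    · change foldOntoFourCrown x y b u (L.e (-1)) = L.e (-1)
      rw [L.e_neg_one, foldOntoFourCrown_of_isMax hconn hy, if_pos rfl]
  · intro v _
    unfold foldOntoFourCrown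
    split_ifs
    exacts [⟨0, L.e_zero⟩, ⟨2, rfl⟩, ⟨-1, L.e_neg_one⟩, ⟨1, rfl⟩]
  · intro a w ha hw _
    rw [foldOntoFourCrown_of_isMin ha, foldOntoFourCrown_of_isMax hconn hw]
    split_ifs
    exacts [hxy.le, hxu.le, hby.le, hbu.le]

lemma SimpleGraph.Walk.comp_getVert_succ_mod {G : SimpleGraph α} (hG : G ≤ extremalGraph α)
    {x y : α} (hxy : x < y) (W : G.Walk x y) {i : ℕ} (hi : i ≤ W.length) :
    Comp (W.getVert i) (W.getVert ((i + 1) % (W.length + 1))) := by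
  rcases hi.lt_or_eq with hi | rfl
  · rw [Nat.mod_eq_of_lt (by omega)]
    exact comp_of_extremalGraph_adj (hG (W.adj_getVert_succ hi))
  · rw [Nat.mod_self, W.getVert_length, W.getVert_zero]
    exact (comp_of_lt hxy).symm

lemma adj_deleteEdges_of_le [Nontrivial α] (hconn : ConnectedPoset α) {x y a u : α}
    (hy : IsMax y) (ha : IsMin a) (hu : IsMax u) (hau : a ≤ u) (hne : ¬ (a = x ∧ u = y)) :
    ((extremalGraph α).deleteEdges {s(x, y)}).Adj a u := by
  refine deleteEdges_adj.2 ⟨.inl ⟨ha, hu, hconn.lt_of_isMin_of_isMax ha hu hau⟩, ?_⟩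
  rw [Set.mem_singleton_iff, Sym2.eq_iff]
  rintro (h | ⟨rfl, -⟩)
  exacts [hne h, hconn.not_isMax_of_isMin ha hy]

theorem exists_cyclicLabelling [Finite α] [Nontrivial α] (hconn : ConnectedPoset α) {x y : α}
    (hx : x ∈ EP α) (hy : y ∈ EP α) (hxy : x < y)
    (hreach : ((extremalGraph α).deleteEdges {s(x, y)}).Reachable x y) :
    ∃ m, 4 ≤ m ∧ Nonempty (CyclicLabelling x y m) := by
  set G := (extremalGraph α).deleteEdges {s(x, y)}
  have hG : G ≤ extremalGraph α := deleteEdges_le _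
  have hxmin : IsMin x := isMin_of_mem_EP_of_lt hx hxy
  have hymax : IsMax y := isMax_of_mem_EP_of_lt hy hxy
  have hreachG : ∀ v ∈ EP α, G.Reachable x v := fun v hv =>
    reachable_deleteEdges_of_reachable hreach (hconn.extremalGraph_reachable hx hv)
  have hpar : ∀ v ∈ EP α, IsMin v ↔ Even (G.dist x v) := fun v hv =>
    isMin_iff_even_dist hG hxmin (hreachG v hv)
  -- a shortest path `x = W₀, W₁, …, W_D = y` avoiding the edge `xy` closes up to the crown
  obtain ⟨W, hW⟩ := hreach.exists_walk_length_eq_dist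
  set D := G.dist x y
  have hdistW : ∀ i ≤ D, G.dist x (W.getVert i) = i := fun i hi =>
    W.dist_getVert_of_length_eq_dist hW (hW ▸ hi)
  have hWEP : ∀ i, W.getVert i ∈ EP α := fun i => mem_EP_of_reachable hG hx ⟨W.take i⟩
  have hDodd : D % 2 = 1 := by
    have := mt (hpar y hy).2 fun h => hconn.not_isMax_of_isMin h hymax
    rw [Nat.even_iff] at this
    omega
  have hD1 : D ≠ 1 := fun h => by simpa [G] using dist_eq_one_iff_adj.1 h
  refine ⟨D + 1, by omega, ⟨{
    e := fun k => W.getVert k.val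
    φ := fun v => (G.dist x v : ZMod (D + 1))
    e_zero := by simp
    e_neg_one := by rw [ZMod.val_neg_one, ← hW, W.getVert_length]
    e_mem := fun k => hWEP _
    comp_succ := fun k => ?_
    φ_e := fun k => by rw [hdistW _ (Nat.lt_succ_iff.1 k.val_lt), ZMod.natCast_zmod_val]
    φ_step := fun a u ha hu hau => ?_
    isMin_e_φ := fun a ha => ?_ }⟩⟩
  · obtain ⟨i, hi, rfl⟩ : ∃ i < D + 1, (i : ZMod (D + 1)) = k :=
      ⟨k.val, k.val_lt, k.natCast_zmod_val⟩
    have h := W.comp_getVert_succ_mod hG hxy (i := i) (by omega)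
    rw [hW] at h
    simpa only [← Nat.cast_succ, ZMod.val_natCast, Nat.mod_eq_of_lt hi] using h
  · by_cases hxy' : a = x ∧ u = y
    · rw [hxy'.1, hxy'.2]
      refine .inr ?_
      rw [SimpleGraph.dist_self, Nat.cast_zero, ← Nat.cast_succ, ZMod.natCast_self]
    · rcases dist_eq_add_one_or_of_adj hG hxmin (hreachG a (.inl ha))
        (adj_deleteEdges_of_le hconn hymax ha hu hau hxy') with h | h
      · exact .inl (by rw [h, Nat.cast_succ])
      · exact .inr (by rw [h, Nat.cast_succ])
  · simp only [ZMod.val_natCast]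
    have hle : G.dist x a % (D + 1) ≤ D := Nat.lt_succ_iff.1 (Nat.mod_lt _ D.succ_pos)
    rw [hpar _ (hWEP _), hdistW _ hle, Nat.even_iff, Nat.mod_mod_of_dvd _ (by omega),
      ← Nat.even_iff, ← hpar a (.inl ha)]
    exact ha

end

/-- if `E(P)` contains a crown having an edge `(x,y)` not
belonging to any improper 4-crown of `E(P)`, then `P` has a retract which is
a crown containing `x` and `y`. -/
theorem stmt14 {α : Type*} [PartialOrder α] [Fintype α]
    (hconn : ConnectedPoset α)
    (S : Set α) (hSE : S ⊆ EP α) (hS : IsCrown S)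
    (x y : α) (hx : x ∈ S) (hy : y ∈ S) (hxy : x < y)
    (hedge : ¬ ∃ a b v w : α, IsImproper4CrownE a b v w ∧
      (x = a ∨ x = b) ∧ (y = v ∨ y = w)) :
    ∃ C : Set α, IsCrown C ∧ x ∈ C ∧ y ∈ C ∧ IsRetract C := by
  have : Nontrivial α := ⟨⟨x, y, hxy.ne⟩⟩
  have hreach : ((extremalGraph α).deleteEdges {s(x, y)}).Reachable x y :=
    (hS.reachable_deleteEdges ⟨hx, hy, comp_of_lt hxy⟩).mono
      (SimpleGraph.deleteEdges_mono (compGraph_le_extremalGraph hSE))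
  obtain ⟨m, hm, ⟨L⟩⟩ := exists_cyclicLabelling hconn (hSE hx) (hSE hy) hxy hreach
  refine ⟨Set.range L.e, L.isCrown hm, ⟨0, L.e_zero⟩, ⟨-1, L.e_neg_one⟩, ?_⟩
  rcases hm.eq_or_lt with rfl | hm
  · exact L.isRetract_of_four hconn hxy hedge
  · exact L.isRetract hm
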